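/- arXiv:1210.6023 — 2 statements merged into one kernel-verified Lean document; each statement's English description precedes it below -/
import Mathlib

section
/- Fix real numbers p > 0 and j0 ≥ 0, and let C ∈ ℝ satisfy C² = j0²·p². For n ∈ ℕ set G(n) = sgn(C)·j0·(n+1), F(n) = (j0² + (n+1)² − 1)/2, and ε_n = √(p²/(j0² + (n+1)² − 1)). Then for every real j with j > 1/2 and j ≥ j0, the sequence n ↦ ε_n · √((2F(n) + 1 − j² − G(n)²/j²)/((2j+1)(2j−1))) converges, as n → ∞, to √((p² − C²/j²)/((2j+1)(2j−1))), where √ denotes the real square root. (This is the statement lim_{n→∞} ε_n α_j^{F(n),G(n)} = α̃_j^{p²,C} of Proposition 1.) -/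
/-! Writing `s n = j0² + (n+1)² - 1 = 2 F(n)`, the radicand of `α_j^{F(n),G(n)}` is affine in `s n`,
since `G(n)² = j0² (n+1)² = j0² (s n - j0² + 1)`. Hence `ε_n² (α_j^{F(n),G(n)})² = p² (a + b / s n)` for
constants `a, b`, which tends to `p² a`, and `C² = j0² p²` identifies `p² a` with `(α̃_j^{p²,C})²`. -/

open Filter Topology

lemma Real.sq_sign_mul_eq_sq {C a : ℝ} (h : C = 0 → a = 0) : (Real.sign C * a) ^ 2 = a ^ 2 := by
  rcases eq_or_ne C 0 with hC | hC
  · simp [h hC]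
  · rcases Real.sign_apply_eq_of_ne_zero C hC with h | h <;> rw [h] <;> ring

lemma tendsto_sqrt_div_mul_sqrt_affine {s : ℕ → ℝ} (hs : Tendsto s atTop atTop) {c : ℝ}
    (hc : 0 ≤ c) (a b : ℝ) :
    Tendsto (fun n => √(c / s n) * √(a * s n + b)) atTop (𝓝 √(c * a)) := by
  have hlim : Tendsto (fun n => c * a + c * b * (s n)⁻¹) atTop (𝓝 (c * a)) := by
    simpa using tendsto_const_nhds.add (hs.inv_tendsto_atTop.const_mul (c * b))
  refine hlim.sqrt.congr' ?_
  filter_upwards [hs.eventually_gt_atTop 0] with n hn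
  rw [← Real.sqrt_mul (div_nonneg hc hn.le)]
  congr 1
  field_simp

lemma tendsto_sq_add_succ_sq_sub_one_atTop (a : ℝ) :
    Tendsto (fun n : ℕ => a ^ 2 + ((n : ℝ) + 1) ^ 2 - 1) atTop atTop :=
  tendsto_atTop_mono (fun n => by nlinarith [sq_nonneg a, n.cast_nonneg (α := ℝ)])
    tendsto_natCast_atTop_atTop

theorem contraction_alpha_limit_general (p j0 C : ℝ) (hp : 0 < p)
    (hC : C ^ 2 = j0 ^ 2 * p ^ 2) (j : ℝ) (hj : 1 / 2 < j) :
    Filter.Tendsto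
      (fun n : ℕ =>
        Real.sqrt (p ^ 2 / (j0 ^ 2 + ((n : ℝ) + 1) ^ 2 - 1)) *
          Real.sqrt
            ((2 * ((j0 ^ 2 + ((n : ℝ) + 1) ^ 2 - 1) / 2) + 1 - j ^ 2 -
                (Real.sign C * j0 * ((n : ℝ) + 1)) ^ 2 / j ^ 2) /
              ((2 * j + 1) * (2 * j - 1))))
      Filter.atTop
      (nhds (Real.sqrt ((p ^ 2 - C ^ 2 / j ^ 2) / ((2 * j + 1) * (2 * j - 1))))) := by
  set D := (2 * j + 1) * (2 * j - 1)
  have hj_ne : j ≠ 0 := by linarith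
  have hG : (Real.sign C * j0) ^ 2 = j0 ^ 2 :=
    Real.sq_sign_mul_eq_sq fun hC0 => by
      simpa [hC0, hp.ne'] using hC
  have hlim := tendsto_sqrt_div_mul_sqrt_affine (tendsto_sq_add_succ_sq_sub_one_atTop j0)
    (sq_nonneg p) ((1 - j0 ^ 2 / j ^ 2) / D) ((1 - j ^ 2 + j0 ^ 2 * (j0 ^ 2 - 1) / j ^ 2) / D)
  have hval : (p ^ 2 - C ^ 2 / j ^ 2) / D = p ^ 2 * ((1 - j0 ^ 2 / j ^ 2) / D) := by
    rw [hC]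
    ring
  rw [hval]
  refine hlim.congr fun n => ?_
  rw [mul_pow, hG]
  congr 2
  field_simp
  ring

theorem contraction_alpha_limit (p j0 C : ℝ) (hp : 0 < p) (hj0 : 0 ≤ j0)
    (hC : C ^ 2 = j0 ^ 2 * p ^ 2) (j : ℝ) (hj : 1 / 2 < j) (hjj0 : j0 ≤ j) :
    Filter.Tendsto
      (fun n : ℕ =>
        Real.sqrt (p ^ 2 / (j0 ^ 2 + ((n : ℝ) + 1) ^ 2 - 1)) *
          Real.sqrt
            ((2 * ((j0 ^ 2 + ((n : ℝ) + 1) ^ 2 - 1) / 2) + 1 - j ^ 2 -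
                (Real.sign C * j0 * ((n : ℝ) + 1)) ^ 2 / j ^ 2) /
              ((2 * j + 1) * (2 * j - 1))))
      Filter.atTop
      (nhds (Real.sqrt ((p ^ 2 - C ^ 2 / j ^ 2) / ((2 * j + 1) * (2 * j - 1))))) :=
  contraction_alpha_limit_general p j0 C hp hC j hj
end

section
/- Fix real numbers p > 0 and j0 ≥ 0, and let C ∈ ℝ satisfy C² = j0²·p². For n ∈ ℕ set G(n) = sgn(C)·j0·(n+1), F(n) = (j0² + (n+1)² − 1)/2, ε_n = √(p²/(j0² + (n+1)² − 1)), α_j(n) = √((2F(n) + 1 − j² − G(n)²/j²)/((2j+1)(2j−1))), and β_j(n) = G(n)/(j(j+1)). Then for every real j with j > 1/2 and j ≥ j0, and every real m with −j ≤ m ≤ j, the following three limits hold as n → ∞: (i) ε_n·α_j(n)·√((j−m)(j−m−1)) → α̃_j·√((j−m)(j−m−1)); (ii) ε_n·β_j(n)·√((j−m)(j+m+1)) → (C/(j(j+1)))·√((j−m)(j+m+1)); (iii) −ε_n·α_{j+1}(n)·√((j+m+1)(j+m+2)) → −α̃_{j+1}·√((j+m+1)(j+m+2)); where α̃_j = √((p²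 − C²/j²)/((2j+1)(2j−1))). (These are the limits of the matrix elements of ρ_{F(n),G(n)}(ε_n N₊) in Theorem 1, converging to the matrix elements of η_{p²,C}(P₊).) -/
/-- Contraction parameter ε_n = √(p²/(j0² + (n+1)² − 1)). -/
noncomputable def epsSeq (p j0 : ℝ) (n : ℕ) : ℝ :=
  Real.sqrt (p ^ 2 / (j0 ^ 2 + ((n : ℝ) + 1) ^ 2 - 1))

/-- G(n) = sgn(C)·j0·(n+1). -/
noncomputable def Gseq (C j0 : ℝ) (n : ℕ) : ℝ :=
  Real.sign C * j0 * ((n : ℝ) + 1)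

/-- F(n) = (j0² + (n+1)² − 1)/2. -/
noncomputable def Fseq (j0 : ℝ) (n : ℕ) : ℝ :=
  (j0 ^ 2 + ((n : ℝ) + 1) ^ 2 - 1) / 2

/-- α_j(n) = √((2F(n) + 1 − j² − G(n)²/j²)/((2j+1)(2j−1))). -/
noncomputable def alphaSeq (p j0 C j : ℝ) (n : ℕ) : ℝ :=
  Real.sqrt
    ((2 * Fseq j0 n + 1 - j ^ 2 - (Gseq C j0 n) ^ 2 / j ^ 2) /
      ((2 * j + 1) * (2 * j - 1)))

/-- β_j(n) = G(n)/(j(j+1)). -/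
noncomputable def betaSeq (C j0 j : ℝ) (n : ℕ) : ℝ :=
  Gseq C j0 n / (j * (j + 1))

/-- α̃_j = √((p² − C²/j²)/((2j+1)(2j−1))). -/
noncomputable def alphaTilde (p C j : ℝ) : ℝ :=
  Real.sqrt ((p ^ 2 - C ^ 2 / j ^ 2) / ((2 * j + 1) * (2 * j - 1)))

/-! Since `2 F(n) ~ (n+1)²`, the contraction parameter behaves like `ε_n ~ |p| / (n+1)`. Hence
`ε_n β_j(n) → sgn(C) j0 |p| / (j(j+1)) = C / (j(j+1))`, and `ε_n² (2F(n) + 1 − j² − G(n)²/j²)`,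
the square of `ε_n α_j(n)` up to the constant `(2j+1)(2j−1)`, tends to
`p² − sgn(C)² j0² p² / j² = p² − C²/j²`. Continuity of `√` and of multiplication by the
`m`-dependent factors gives the three limits. -/

open Filter Topology

theorem Real.sign_mul_abs (r : ℝ) : Real.sign r * |r| = r := by
  rcases lt_trichotomy r 0 with h | rfl | h
  · rw [Real.sign_of_neg h, abs_of_neg h]; ring
  · simp
  · rw [Real.sign_of_pos h, abs_of_pos h]; ring

theorem Real.sign_sq_mul_sq (r : ℝ) : Real.sign r ^ 2 * r ^ 2 = r ^ 2 := by
  conv_rhs => rw [← Real.sign_mul_abs r]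
  rw [mul_pow, sq_abs]

section Contraction

variable (p j0 C : ℝ)

theorem two_mul_Fseq (n : ℕ) : 2 * Fseq j0 n = j0 ^ 2 + ((n : ℝ) + 1) ^ 2 - 1 := by
  unfold Fseq; ring

theorem Fseq_nonneg (n : ℕ) : 0 ≤ Fseq j0 n := by
  have : (1 : ℝ) ≤ ((n : ℝ) + 1) ^ 2 := one_le_pow₀ (by simp)
  unfold Fseq; nlinarith [sq_nonneg j0]

theorem tendsto_Fseq_atTop : Tendsto (Fseq j0) atTop atTop := by
  have hsucc : Tendsto (fun n : ℕ => (n : ℝ) + 1) atTop atTop :=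
    tendsto_atTop_add_const_right _ 1 tendsto_natCast_atTop_atTop
  refine Tendsto.atTop_div_const two_pos ?_
  exact tendsto_atTop_add_const_right _ _ <|
    tendsto_atTop_add_const_left _ _ <| (tendsto_pow_atTop two_ne_zero).comp hsucc

theorem tendsto_sq_succ_div_two_mul_Fseq :
    Tendsto (fun n : ℕ => ((n : ℝ) + 1) ^ 2 / (2 * Fseq j0 n)) atTop (𝓝 1) := by
  have h := ((tendsto_Fseq_atTop j0).inv_tendsto_atTop.const_mul ((1 - j0 ^ 2) / 2)).const_add 1
  rw [mul_zero, add_zero] at h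
  refine h.congr' ?_
  filter_upwards [(tendsto_Fseq_atTop j0).eventually_gt_atTop 0] with n hn
  rw [Pi.inv_apply, show ((n : ℝ) + 1) ^ 2 = 2 * Fseq j0 n + 1 - j0 ^ 2 by
    linarith [two_mul_Fseq j0 n]]
  field_simp
  ring

theorem epsSeq_sq (n : ℕ) : epsSeq p j0 n ^ 2 = p ^ 2 / (2 * Fseq j0 n) := by
  rw [epsSeq, ← two_mul_Fseq, Real.sq_sqrt (by have := Fseq_nonneg j0 n; positivity)]

theorem epsSeq_nonneg (n : ℕ) : 0 ≤ epsSeq p j0 n :=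
  Real.sqrt_nonneg _

theorem tendsto_epsSeq_mul_succ :
    Tendsto (fun n : ℕ => epsSeq p j0 n * ((n : ℝ) + 1)) atTop (𝓝 |p|) := by
  have h := ((tendsto_sq_succ_div_two_mul_Fseq j0).const_mul (p ^ 2)).sqrt
  rw [mul_one, Real.sqrt_sq_eq_abs] at h
  refine h.congr fun n => ?_
  calc Real.sqrt (p ^ 2 * (((n : ℝ) + 1) ^ 2 / (2 * Fseq j0 n)))
      = Real.sqrt (epsSeq p j0 n ^ 2 * ((n : ℝ) + 1) ^ 2) := by rw [epsSeq_sq]; ring_nf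
    _ = epsSeq p j0 n * ((n : ℝ) + 1) := by
      rw [← mul_pow, Real.sqrt_sq (mul_nonneg (epsSeq_nonneg p j0 n) (by positivity))]

theorem tendsto_epsSeq_mul_betaSeq (hj0 : 0 ≤ j0) (hC : C ^ 2 = j0 ^ 2 * p ^ 2) (j : ℝ) :
    Tendsto (fun n : ℕ => epsSeq p j0 n * betaSeq C j0 j n) atTop (𝓝 (C / (j * (j + 1)))) := by
  have habs : |C| = j0 * |p| := by
    rw [← abs_of_nonneg hj0, ← abs_mul, ← sq_eq_sq_iff_abs_eq_abs, hC, mul_pow]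
  have h := (tendsto_epsSeq_mul_succ p j0).const_mul (Real.sign C * j0 / (j * (j + 1)))
  rw [show Real.sign C * j0 / (j * (j + 1)) * |p| = C / (j * (j + 1)) by
    conv_rhs => rw [← Real.sign_mul_abs C, habs]
    ring] at h
  refine h.congr fun n => ?_
  rw [betaSeq, Gseq]
  ring

theorem tendsto_epsSeq_sq_mul_alphaSeq_numerator (hC : C ^ 2 = j0 ^ 2 * p ^ 2) (j : ℝ) :
    Tendsto (fun n : ℕ => epsSeq p j0 n ^ 2 * (2 * Fseq j0 n + 1 - j ^ 2 - Gseq C j0 n ^ 2 / j ^ 2))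
      atTop (𝓝 (p ^ 2 - C ^ 2 / j ^ 2)) := by
  have hsign : Real.sign C ^ 2 * j0 ^ 2 * p ^ 2 = C ^ 2 := by
    rw [mul_assoc, ← hC, Real.sign_sq_mul_sq]
  -- the sequence is `p² + p² (1 − j²) / (2F) − (sgn(C)² j0² p² / j²) · (n+1)² / (2F)`
  have h := (((tendsto_Fseq_atTop j0).inv_tendsto_atTop.const_mul
    (p ^ 2 * (1 - j ^ 2) / 2)).const_add (p ^ 2)).sub
    ((tendsto_sq_succ_div_two_mul_Fseq j0).const_mul (Real.sign C ^ 2 * j0 ^ 2 * p ^ 2 / j ^ 2))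
  rw [mul_zero, add_zero, mul_one, hsign] at h
  refine h.congr' ?_
  filter_upwards [(tendsto_Fseq_atTop j0).eventually_gt_atTop 0] with n hn
  rw [Pi.inv_apply, epsSeq_sq, Gseq]
  linear_combination (((n : ℝ) + 1) ^ 2 / (2 * Fseq j0 n * j ^ 2)) * hsign -
    div_mul_cancel₀ (p ^ 2) (by positivity : 2 * Fseq j0 n ≠ 0)

theorem tendsto_epsSeq_mul_alphaSeq (hC : C ^ 2 = j0 ^ 2 * p ^ 2) (j : ℝ) :
    Tendsto (fun n : ℕ => epsSeq p j0 n * alphaSeq p j0 C j n) atTop (𝓝 (alphaTilde p C j)) := by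
  refine ((tendsto_epsSeq_sq_mul_alphaSeq_numerator p j0 C hC j).div_const _).sqrt.congr fun n => ?_
  rw [alphaSeq, mul_div_assoc, Real.sqrt_mul (sq_nonneg _), Real.sqrt_sq (epsSeq_nonneg p j0 n)]

end Contraction

theorem contraction_Nplus_matrix_elements_general (p j0 C : ℝ) (hj0 : 0 ≤ j0)
    (hC : C ^ 2 = j0 ^ 2 * p ^ 2) (j : ℝ)
    (m : ℝ) :
    Filter.Tendsto
        (fun n : ℕ => epsSeq p j0 n * alphaSeq p j0 C j n *
          Real.sqrt ((j - m) * (j - m - 1)))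
        Filter.atTop (nhds (alphaTilde p C j * Real.sqrt ((j - m) * (j - m - 1)))) ∧
    Filter.Tendsto
        (fun n : ℕ => epsSeq p j0 n * betaSeq C j0 j n *
          Real.sqrt ((j - m) * (j + m + 1)))
        Filter.atTop (nhds (C / (j * (j + 1)) * Real.sqrt ((j - m) * (j + m + 1)))) ∧
    Filter.Tendsto
        (fun n : ℕ => -(epsSeq p j0 n * alphaSeq p j0 C (j + 1) n *
          Real.sqrt ((j + m + 1) * (j + m + 2))))
        Filter.atTop
        (nhds (-(alphaTilde p C (j + 1) * Real.sqrt ((j + m + 1) * (j + m + 2))))) :=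
  ⟨(tendsto_epsSeq_mul_alphaSeq p j0 C hC j).mul_const _,
    (tendsto_epsSeq_mul_betaSeq p j0 C hj0 hC j).mul_const _,
    ((tendsto_epsSeq_mul_alphaSeq p j0 C hC (j + 1)).mul_const _).neg⟩

theorem contraction_Nplus_matrix_elements (p j0 C : ℝ) (hp : 0 < p) (hj0 : 0 ≤ j0)
    (hC : C ^ 2 = j0 ^ 2 * p ^ 2) (j : ℝ) (hj : 1 / 2 < j) (hjj0 : j0 ≤ j)
    (m : ℝ) (hm1 : -j ≤ m) (hm2 : m ≤ j) :
    Filter.Tendsto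
        (fun n : ℕ => epsSeq p j0 n * alphaSeq p j0 C j n *
          Real.sqrt ((j - m) * (j - m - 1)))
        Filter.atTop (nhds (alphaTilde p C j * Real.sqrt ((j - m) * (j - m - 1)))) ∧
    Filter.Tendsto
        (fun n : ℕ => epsSeq p j0 n * betaSeq C j0 j n *
          Real.sqrt ((j - m) * (j + m + 1)))
        Filter.atTop (nhds (C / (j * (j + 1)) * Real.sqrt ((j - m) * (j + m + 1)))) ∧
    Filter.Tendsto
        (fun n : ℕ => -(epsSeq p j0 n * alphaSeq p j0 C (j + 1) n *
          Real.sqrt ((j + m + 1) * (j + m + 2))))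
        Filter.atTop
        (nhds (-(alphaTilde p C (j + 1) * Real.sqrt ((j + m + 1) * (j + m + 2))))) :=
  contraction_Nplus_matrix_elements_general p j0 C hj0 hC j m
end
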